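/- arXiv:2204.01347 — 2 statements merged into one kernel-verified Lean document; each statement's English description precedes it below -/
import Mathlib

section
/- For positive integers n and s and any real x, Σ_{k=0}^{n-1} (-1)^k·x^{2k}/(2k+1)^s = Σ_{k=1}^{n} (-1)^{k-1}·C(n,k)·Σ_{l=0}^{k-1} ((1/2)_l)^s · (1-k)_l · (-x²)^l / (((3/2)_l)^s · l!). -/
open Finset

noncomputable def rising (a : ℝ) (l : ℕ) : ℝ := ∏ i ∈ Finset.range l, (a + (i : ℝ))

lemma rising_half_pos (l : ℕ) : 0 < rising (1/2) l := by
  unfold rising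
  apply Finset.prod_pos
  intro i _
  positivity

lemma rising_three_half (l : ℕ) : rising (3/2) l = (2*l+1) * rising (1/2) l := by
  induction l with
  | zero => simp [rising]
  | succ m ih =>
      unfold rising at *
      rw [Finset.prod_range_succ, Finset.prod_range_succ, ih]
      push_cast
      ring

lemma rising_one_sub (k l : ℕ) (hk : 1 ≤ k) :
    rising (1 - (k:ℝ)) l = (-1)^l * ((k-1).descFactorial l : ℝ) := by
  induction l with
  | zero => simp [rising]
  | succ m ih =>
      unfold rising at *
      rw [Finset.prod_range_succ, ih, Nat.descFactorial_succ]
      rcases le_or_gt k (m) with h | h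
      · -- m ≥ k, so descFactorial (k-1) m = 0
        have : (k-1).descFactorial m = 0 := by
          apply Nat.descFactorial_eq_zero_iff_lt.2
          omega
        rw [this]
        push_cast
        ring
      · -- m < k i.e. m ≤ k-1
        have hcast : ((k - 1 - m : ℕ) : ℝ) = (k:ℝ) - 1 - m := by
          have h1 : m ≤ k - 1 := by omega
          push_cast [Nat.cast_sub h1, Nat.cast_sub hk]
          ring
        push_cast [hcast]
        ring

lemma neg_one_sq_pow (l : ℕ) : ((-1:ℝ)^l) * ((-1:ℝ)^l) = 1 := by
  rw [← pow_add, ← two_mul, pow_mul]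
  norm_num

lemma term_simp (k l s : ℕ) (hk : 1 ≤ k) (x : ℝ) :
    (rising (1 / 2) l) ^ s * rising (1 - (k : ℝ)) l * (-x ^ 2) ^ l /
      ((rising (3 / 2) l) ^ s * (Nat.factorial l : ℝ)) =
    ((k-1).choose l : ℝ) * x ^ (2*l) / (2 * (l:ℝ) + 1) ^ s := by
  have hx : (-x^2 : ℝ)^l = (-1)^l * x^(2*l) := by rw [neg_pow, pow_mul]
  have key : rising (1 - (k:ℝ)) l * (-x^2)^l
      = (Nat.factorial l : ℝ) * ((k-1).choose l : ℝ) * x^(2*l) := by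
    rw [rising_one_sub k l hk, hx, Nat.descFactorial_eq_factorial_mul_choose]
    push_cast
    calc ((-1:ℝ))^l * ((l.factorial : ℝ) * ((k-1).choose l : ℝ)) * ((-1)^l * x^(2*l))
        = ((-1:ℝ)^l * (-1)^l) * ((l.factorial : ℝ) * ((k-1).choose l : ℝ) * x^(2*l)) := by ring
      _ = (l.factorial : ℝ) * ((k-1).choose l : ℝ) * x^(2*l) := by rw [neg_one_sq_pow]; ring
  rw [mul_assoc, key, rising_three_half, mul_pow]
  have h1 : rising (1/2 : ℝ) l ≠ 0 := ne_of_gt (rising_half_pos l)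
  have h2 : ((2*(l:ℝ)+1))^s ≠ 0 := by positivity
  have h3 : (l.factorial : ℝ) ≠ 0 := by exact_mod_cast l.factorial_ne_zero
  field_simp

-- alternating double binomial sum
lemma sumJ (n l : ℕ) :
    ∑ j ∈ Finset.range (n+1), (-1:ℝ)^j * (n.choose j : ℝ) * (j.choose l : ℝ)
      = if n = l then (-1:ℝ)^l else 0 := by
  rcases lt_or_ge n l with h | h
  · rw [if_neg (by omega)]
    apply Finset.sum_eq_zero
    intro j hj
    simp only [Finset.mem_range] at hj
    rw [Nat.choose_eq_zero_of_lt (by omega : j < l)]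
    simp
  · -- l ≤ n
    have hsub : Finset.Ico l (n+1) ⊆ Finset.range (n+1) := by
      intro j hj; simp only [Finset.mem_Ico, Finset.mem_range] at *; omega
    rw [← Finset.sum_subset hsub (by
      intro j hj hj2
      simp only [Finset.mem_range, Finset.mem_Ico, not_and, not_le] at hj hj2
      rw [Nat.choose_eq_zero_of_lt (by omega : j < l)]
      simp)]
    rw [Finset.sum_Ico_eq_sum_range]
    have hrw : ∀ m ∈ Finset.range (n+1-l),
        (-1:ℝ)^(l+m) * (n.choose (l+m) : ℝ) * ((l+m).choose l : ℝ)
          = ((-1:ℝ)^l * (n.choose l : ℝ)) * ((-1:ℝ)^m * ((n-l).choose m : ℝ)) := by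
      intro m hm
      simp only [Finset.mem_range] at hm
      have := Nat.choose_mul (n := n) (show l ≤ l + m by omega)
      have h2 : (n.choose (l+m) : ℝ) * ((l+m).choose l : ℝ)
          = (n.choose l : ℝ) * ((n-l).choose m : ℝ) := by
        rw_mod_cast [this]
        simp
      rw [pow_add]
      linear_combination ((-1:ℝ)^l * (-1:ℝ)^m) * h2
    rw [Finset.sum_congr rfl hrw, ← Finset.mul_sum]
    have halt : ∑ m ∈ Finset.range (n-l+1), (-1:ℝ)^m * ((n-l).choose m : ℝ)
        = if n - l = 0 then 1 else 0 := by
      have := @Int.alternating_sum_range_choose (n-l)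
      exact_mod_cast congrArg (fun z : ℤ => (z : ℝ)) this
    have hrange : n + 1 - l = n - l + 1 := by omega
    rw [hrange, halt]
    rcases eq_or_lt_of_le h with rfl | h'
    · simp
    · rw [if_neg (by omega), if_neg (by omega), mul_zero]

lemma sumK (n l : ℕ) (hn : 1 ≤ n) (hl : l < n) :
    ∑ j ∈ Finset.range n, (-1:ℝ)^j * (n.choose (j+1) : ℝ) * (j.choose l : ℝ) = (-1:ℝ)^l := by
  induction n with
  | zero => omega
  | succ m ih =>
      have step : ∀ j, ((m+1).choose (j+1) : ℝ) = (m.choose j : ℝ) + (m.choose (j+1) : ℝ) := by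
        intro j; push_cast [Nat.choose_succ_succ]; ring
      have expand : ∑ j ∈ Finset.range (m+1), (-1:ℝ)^j * ((m+1).choose (j+1) : ℝ) * (j.choose l : ℝ)
          = (∑ j ∈ Finset.range (m+1), (-1:ℝ)^j * (m.choose j : ℝ) * (j.choose l : ℝ))
            + ∑ j ∈ Finset.range (m+1), (-1:ℝ)^j * (m.choose (j+1) : ℝ) * (j.choose l : ℝ) := by
        rw [← Finset.sum_add_distrib]
        apply Finset.sum_congr rfl
        intro j _
        rw [step j]
        ring
      rw [expand, sumJ m l]
      rcases lt_or_ge l m with h | h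
      · have hm : 1 ≤ m := by omega
        rw [if_neg (by omega)]
        have last : ∑ j ∈ Finset.range (m+1), (-1:ℝ)^j * (m.choose (j+1) : ℝ) * (j.choose l : ℝ)
            = ∑ j ∈ Finset.range m, (-1:ℝ)^j * (m.choose (j+1) : ℝ) * (j.choose l : ℝ) := by
          rw [Finset.sum_range_succ, Nat.choose_eq_zero_of_lt (by omega : m < m+1)]
          simp
        rw [last, ih hm h]
        ring
      · -- l = m
        have : l = m := by omega
        subst this
        rw [if_pos rfl]
        have last : ∑ j ∈ Finset.range (l+1), (-1:ℝ)^j * (l.choose (j+1) : ℝ) * (j.choose l : ℝ) = 0 := by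
          apply Finset.sum_eq_zero
          intro j hj
          simp only [Finset.mem_range] at hj
          rcases lt_or_ge j l with hjl | hjl
          · rw [Nat.choose_eq_zero_of_lt hjl]; simp
          · have : j = l := by omega
            subst this
            rw [Nat.choose_eq_zero_of_lt (by omega : j < j+1)]
            simp
        rw [last]
        ring

theorem odd_alt_power_sum_hypergeom (n s : ℕ) (hn : 1 ≤ n) (hs : 1 ≤ s) (x : ℝ) :
    ∑ k ∈ Finset.range n, (-1 : ℝ) ^ k * x ^ (2 * k) / (2 * (k : ℝ) + 1) ^ s =
      ∑ k ∈ Finset.Icc 1 n, (-1 : ℝ) ^ (k - 1) * (n.choose k : ℝ) *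
        ∑ l ∈ Finset.range k,
          (rising (1 / 2) l) ^ s * rising (1 - (k : ℝ)) l * (-x ^ 2) ^ l /
            ((rising (3 / 2) l) ^ s * (Nat.factorial l : ℝ)) := by
  have hRHS : ∀ k ∈ Finset.Icc 1 n,
      (-1 : ℝ) ^ (k - 1) * (n.choose k : ℝ) *
        ∑ l ∈ Finset.range k,
          (rising (1 / 2) l) ^ s * rising (1 - (k : ℝ)) l * (-x ^ 2) ^ l /
            ((rising (3 / 2) l) ^ s * (Nat.factorial l : ℝ))
      = ∑ l ∈ Finset.range n, (-1 : ℝ) ^ (k - 1) * (n.choose k : ℝ) *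
          (((k-1).choose l : ℝ) * x ^ (2*l) / (2 * (l:ℝ) + 1) ^ s) := by
    intro k hk
    simp only [Finset.mem_Icc] at hk
    have h1 : ∑ l ∈ Finset.range k,
        (rising (1 / 2) l) ^ s * rising (1 - (k : ℝ)) l * (-x ^ 2) ^ l /
          ((rising (3 / 2) l) ^ s * (Nat.factorial l : ℝ))
        = ∑ l ∈ Finset.range k, ((k-1).choose l : ℝ) * x ^ (2*l) / (2 * (l:ℝ) + 1) ^ s := by
      apply Finset.sum_congr rfl
      intro l _
      exact term_simp k l s hk.1 x
    rw [h1]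
    rw [Finset.sum_subset (Finset.range_subset_range.2 hk.2) (by
      intro l hl hl2
      simp only [Finset.mem_range, not_lt] at hl hl2
      rw [Nat.choose_eq_zero_of_lt (by omega : k - 1 < l)]
      simp)]
    rw [Finset.mul_sum]
  rw [Finset.sum_congr rfl hRHS, Finset.sum_comm]
  apply Finset.sum_congr rfl
  intro l hl
  simp only [Finset.mem_range] at hl
  have hIcc : ∑ k ∈ Finset.Icc 1 n, (-1 : ℝ) ^ (k - 1) * (n.choose k : ℝ) *
      (((k-1).choose l : ℝ) * x ^ (2*l) / (2 * (l:ℝ) + 1) ^ s)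
      = (x ^ (2*l) / (2 * (l:ℝ) + 1) ^ s) *
        ∑ j ∈ Finset.range n, (-1:ℝ)^j * (n.choose (j+1) : ℝ) * (j.choose l : ℝ) := by
    rw [Finset.mul_sum, ← Finset.Ico_add_one_right_eq_Icc, Finset.sum_Ico_eq_sum_range]
    apply Finset.sum_congr (by norm_num)
    intro j _
    rw [show 1 + j - 1 = j by omega, show 1 + j = j + 1 by omega]
    ring
  rw [hIcc, sumK n l hn hl]
  ring
end

section
/- For positive integers n and s, the alternating harmonic sum H_n(s̄) = Σ_{k=1}^{n} (-1)^{k-1}/k^s satisfies H_n(s̄) = Σ_{k=1}^{n} (-1)^{k-1}·C(n,k)·Σ_{l=0}^{k-1} ((1)_l)^s·(1-k)_l·(-1)^l/(((2)_l)^s·l!). -/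
open Finset

lemma rising_succ (a : ℝ) (l : ℕ) : rising a (l+1) = rising a l * (a + l) := by
  simp [rising, Finset.prod_range_succ]

lemma rising_one (l : ℕ) : rising 1 l = l.factorial := by
  induction l with
  | zero => simp [rising]
  | succ l ih =>
    rw [rising_succ, ih, Nat.factorial_succ]
    push_cast; ring

lemma rising_two (l : ℕ) : rising 2 l = (l+1).factorial := by
  induction l with
  | zero => simp [rising]
  | succ l ih =>
    rw [rising_succ, ih, Nat.factorial_succ (l+1)]
    push_cast; ring

lemma rising_neg (m l : ℕ) (h : l ≤ m) :
    rising (-(m:ℝ)) l = (-1)^l * (m.factorial : ℝ) / ((m - l).factorial : ℝ) := by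
  induction l with
  | zero =>
    simp only [rising, Finset.range_zero, Finset.prod_empty, pow_zero, Nat.sub_zero, one_mul]
    rw [div_self (Nat.cast_ne_zero.2 (Nat.factorial_ne_zero m))]
  | succ l ih =>
    have hl : l < m := Nat.lt_of_succ_le h
    rw [rising_succ, ih hl.le]
    have hd : m - l = (m - (l+1)) + 1 := by omega
    have hc1 : ((m - (l+1) : ℕ) : ℝ) = (m:ℝ) - ((l:ℝ)+1) := by
      push_cast [Nat.cast_sub h]; ring
    have hfact : ((m - l).factorial : ℝ) = ((m:ℝ) - l) * ((m - (l+1)).factorial : ℝ) := by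
      rw [hd, Nat.factorial_succ]; push_cast; rw [hc1]; ring
    have hlm : (l:ℝ) < m := by exact_mod_cast hl
    have h2 : ((m - (l+1)).factorial : ℝ) ≠ 0 := Nat.cast_ne_zero.2 (Nat.factorial_ne_zero _)
    have h3 : (m:ℝ) - l ≠ 0 := by intro hc; linarith
    rw [hfact]
    field_simp
    ring

lemma term_eq (s k l : ℕ) (hk : 1 ≤ k) (hl : l < k) :
    (rising 1 l) ^ s * rising (1 - (k : ℝ)) l * (-1 : ℝ) ^ l /
      ((rising 2 l) ^ s * (Nat.factorial l : ℝ)) =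
    ((k-1).choose l : ℝ) / ((l+1 : ℕ) : ℝ) ^ s := by
  have hcast : (1 - (k : ℝ)) = -(( (k-1 : ℕ) : ℝ)) := by
    push_cast [Nat.cast_sub hk]; ring
  have hlm : l ≤ k - 1 := by omega
  rw [rising_one, rising_two, hcast, rising_neg _ _ hlm]
  have key : ((k-1).choose l : ℝ) * (l.factorial : ℝ) * (((k-1) - l).factorial : ℝ)
      = ((k-1).factorial : ℝ) := by
    exact_mod_cast congrArg (Nat.cast : ℕ → ℝ)
      (Nat.choose_mul_factorial_mul_factorial hlm)
  have hfs : ((l+1).factorial : ℝ) = ((l+1 : ℕ) : ℝ) * (l.factorial : ℝ) := by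
    rw [Nat.factorial_succ]; push_cast; ring
  have h1 : (l.factorial : ℝ) ≠ 0 := Nat.cast_ne_zero.2 (Nat.factorial_ne_zero _)
  have h2 : (((k-1) - l).factorial : ℝ) ≠ 0 := Nat.cast_ne_zero.2 (Nat.factorial_ne_zero _)
  have h3 : ((l+1 : ℕ) : ℝ) ≠ 0 := by positivity
  have hpow : ((-1:ℝ))^l * (-1:ℝ)^l = 1 := by
    rw [← pow_add]; exact Even.neg_one_pow ⟨l, rfl⟩
  have h2l : ((-1:ℝ))^(l*2) = 1 := by rw [mul_comm, pow_mul]; norm_num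
  rw [hfs, ← key]
  field_simp
  ring_nf
  rw [h2l]
  ring

lemma lemB (n r : ℕ) :
    ∑ j ∈ Finset.range (n+1), (-1:ℝ)^j * (n.choose j) * (j.choose r)
      = if n = r then (-1:ℝ)^r else 0 := by
  rcases lt_or_ge n r with h | h
  · rw [if_neg (by omega)]
    apply Finset.sum_eq_zero
    intro j hj
    have : j.choose r = 0 := Nat.choose_eq_zero_of_lt (by
      have := Finset.mem_range.1 hj; omega)
    simp [this]
  · rw [← Finset.sum_range_add_sum_Ico _ (by omega : r ≤ n+1)]
    have h0 : ∑ j ∈ Finset.range r, (-1:ℝ)^j * (n.choose j) * (j.choose r) = 0 := by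
      apply Finset.sum_eq_zero
      intro j hj
      have : j.choose r = 0 := Nat.choose_eq_zero_of_lt (Finset.mem_range.1 hj)
      simp [this]
    rw [h0, zero_add, Finset.sum_Ico_eq_sum_range]
    have hnr : n + 1 - r = (n - r) + 1 := by omega
    rw [hnr]
    have hstep : ∀ i ∈ Finset.range ((n-r)+1),
        (-1:ℝ)^(r+i) * (n.choose (r+i)) * ((r+i).choose r)
          = ((-1:ℝ)^r * (n.choose r)) * ((-1:ℝ)^i * ((n-r).choose i)) := by
      intro i hi
      have hi' : i ≤ n - r := by have := Finset.mem_range.1 hi; omega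
      have hc : n.choose (r+i) * (r+i).choose r = n.choose r * (n-r).choose i := by
        have := Nat.choose_mul (n := n) (Nat.le_add_right r i)
        simpa [Nat.add_sub_cancel_left] using this
      have hc' : (n.choose (r+i) : ℝ) * ((r+i).choose r) =
          (n.choose r : ℝ) * ((n-r).choose i) := by exact_mod_cast hc
      rw [pow_add]
      linear_combination ((-1:ℝ)^r * (-1:ℝ)^i) * hc'
    rw [Finset.sum_congr rfl hstep, ← Finset.mul_sum]
    have halt : ∑ i ∈ Finset.range ((n-r)+1), (-1:ℝ)^i * ((n-r).choose i)
        = if n - r = 0 then 1 else 0 := by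
      have := Int.alternating_sum_range_choose (n := n - r)
      have := congrArg (Int.cast : ℤ → ℝ) this
      push_cast at this
      exact_mod_cast this
    rw [halt]
    by_cases hnr2 : n = r
    · simp [hnr2]
    · rw [if_neg (by omega), if_neg hnr2, mul_zero]

lemma lemA (n l : ℕ) (hl : l < n) :
    ∑ k ∈ Finset.Icc 1 n, (-1:ℝ)^(k-1) * (n.choose k) * ((k-1).choose l) = (-1:ℝ)^l := by
  induction n with
  | zero => omega
  | succ n ih =>
    have hIcc : ∀ m : ℕ, ∀ f : ℕ → ℝ, ∑ k ∈ Finset.Icc 1 m, f k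
        = ∑ j ∈ Finset.range m, f (j+1) := by
      intro m f
      rw [← Finset.Ico_add_one_right_eq_Icc, Finset.sum_Ico_eq_sum_range]
      simp [add_comm]
    have split : ∀ k, 1 ≤ k → ((n+1).choose k : ℝ) = (n.choose (k-1)) + (n.choose k) := by
      intro k hk
      obtain ⟨j, rfl⟩ := Nat.exists_eq_add_of_le hk
      rw [show 1 + j = j + 1 by ring, Nat.choose_succ_succ]
      push_cast; simp
    have hsplit : ∑ k ∈ Finset.Icc 1 (n+1), (-1:ℝ)^(k-1) * ((n+1).choose k) * ((k-1).choose l)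
        = (∑ k ∈ Finset.Icc 1 (n+1), (-1:ℝ)^(k-1) * (n.choose (k-1)) * ((k-1).choose l))
        + (∑ k ∈ Finset.Icc 1 (n+1), (-1:ℝ)^(k-1) * (n.choose k) * ((k-1).choose l)) := by
      rw [← Finset.sum_add_distrib]
      apply Finset.sum_congr rfl
      intro k hk
      have hk1 : 1 ≤ k := (Finset.mem_Icc.1 hk).1
      rw [split k hk1]; ring
    rw [hsplit]
    have hS1 : ∑ k ∈ Finset.Icc 1 (n+1), (-1:ℝ)^(k-1) * (n.choose (k-1)) * ((k-1).choose l)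
        = if n = l then (-1:ℝ)^l else 0 := by
      rw [hIcc (n+1) (fun k => (-1:ℝ)^(k-1) * (n.choose (k-1)) * ((k-1).choose l))]
      simp only [Nat.add_sub_cancel]
      exact lemB n l
    rw [hS1]
    rcases eq_or_lt_of_le (Nat.lt_succ_iff.1 hl) with hln | hln
    · -- l = n : second sum is 0
      rw [if_pos hln.symm]
      have hS2 : ∑ k ∈ Finset.Icc 1 (n+1), (-1:ℝ)^(k-1) * (n.choose k) * ((k-1).choose l) = 0 := by
        apply Finset.sum_eq_zero
        intro k hk
        obtain ⟨hk1, hk2⟩ := Finset.mem_Icc.1 hk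
        rcases eq_or_lt_of_le hk2 with h | h
        · have : n.choose k = 0 := Nat.choose_eq_zero_of_lt (by omega)
          simp [this]
        · have : (k-1).choose l = 0 := Nat.choose_eq_zero_of_lt (by omega)
          simp [this]
      rw [hS2, add_zero]
    · -- l < n
      rw [if_neg (by omega), zero_add]
      have hS2 : ∑ k ∈ Finset.Icc 1 (n+1), (-1:ℝ)^(k-1) * (n.choose k) * ((k-1).choose l)
          = ∑ k ∈ Finset.Icc 1 n, (-1:ℝ)^(k-1) * (n.choose k) * ((k-1).choose l) := by
        rw [← Finset.Ico_add_one_right_eq_Icc, ← Finset.Ico_add_one_right_eq_Icc,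
          Finset.sum_Ico_succ_top (by omega : 1 ≤ n+1)]
        have : n.choose (n+1) = 0 := Nat.choose_eq_zero_of_lt (by omega)
        simp [this]
      rw [hS2, ih hln]

theorem alt_harmonic_eval (n s : ℕ) (hn : 1 ≤ n) (hs : 1 ≤ s) :
    ∑ k ∈ Finset.Icc 1 n, (-1 : ℝ) ^ (k - 1) / (k : ℝ) ^ s =
      ∑ k ∈ Finset.Icc 1 n, (-1 : ℝ) ^ (k - 1) * (n.choose k : ℝ) *
        ∑ l ∈ Finset.range k,
          (rising 1 l) ^ s * rising (1 - (k : ℝ)) l * (-1 : ℝ) ^ l /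
            ((rising 2 l) ^ s * (Nat.factorial l : ℝ)) := by
  have hIcc : ∀ f : ℕ → ℝ, ∑ k ∈ Finset.Icc 1 n, f k = ∑ j ∈ Finset.range n, f (j+1) := by
    intro f
    rw [← Finset.Ico_add_one_right_eq_Icc, Finset.sum_Ico_eq_sum_range]
    simp [add_comm]
  -- rewrite RHS inner terms
  have step1 : ∀ k ∈ Finset.Icc 1 n,
      (-1 : ℝ) ^ (k - 1) * (n.choose k : ℝ) *
        ∑ l ∈ Finset.range k,
          (rising 1 l) ^ s * rising (1 - (k : ℝ)) l * (-1 : ℝ) ^ l /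
            ((rising 2 l) ^ s * (Nat.factorial l : ℝ))
      = ∑ l ∈ Finset.range n,
          (-1 : ℝ) ^ (k - 1) * (n.choose k : ℝ) * (((k-1).choose l : ℝ) / ((l+1:ℕ):ℝ)^s) := by
    intro k hk
    obtain ⟨hk1, hk2⟩ := Finset.mem_Icc.1 hk
    have e1 : ∑ l ∈ Finset.range k,
        (rising 1 l) ^ s * rising (1 - (k : ℝ)) l * (-1 : ℝ) ^ l /
          ((rising 2 l) ^ s * (Nat.factorial l : ℝ))
        = ∑ l ∈ Finset.range k, ((k-1).choose l : ℝ) / ((l+1:ℕ):ℝ)^s := by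
      apply Finset.sum_congr rfl
      intro l hl
      exact term_eq s k l hk1 (Finset.mem_range.1 hl)
    have e2 : ∑ l ∈ Finset.range k, ((k-1).choose l : ℝ) / ((l+1:ℕ):ℝ)^s
        = ∑ l ∈ Finset.range n, ((k-1).choose l : ℝ) / ((l+1:ℕ):ℝ)^s := by
      apply Finset.sum_subset (Finset.range_subset_range.2 hk2)
      intro l _ hl
      have : (k-1).choose l = 0 := Nat.choose_eq_zero_of_lt (by
        have := Finset.mem_range.1 (show l ∈ Finset.range n from by assumption)
        have hlk : ¬ l < k := fun h => hl (Finset.mem_range.2 h)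
        omega)
      simp [this]
    rw [e1, e2, Finset.mul_sum]
  rw [Finset.sum_congr rfl step1, Finset.sum_comm]
  have step2 : ∀ l ∈ Finset.range n,
      ∑ k ∈ Finset.Icc 1 n,
        (-1 : ℝ) ^ (k - 1) * (n.choose k : ℝ) * (((k-1).choose l : ℝ) / ((l+1:ℕ):ℝ)^s)
      = (-1:ℝ)^l / ((l+1:ℕ):ℝ)^s := by
    intro l hl
    have : ∑ k ∈ Finset.Icc 1 n,
        (-1 : ℝ) ^ (k - 1) * (n.choose k : ℝ) * (((k-1).choose l : ℝ) / ((l+1:ℕ):ℝ)^s)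
        = (∑ k ∈ Finset.Icc 1 n,
            (-1 : ℝ) ^ (k - 1) * (n.choose k : ℝ) * ((k-1).choose l : ℝ)) / ((l+1:ℕ):ℝ)^s := by
      rw [Finset.sum_div]
      apply Finset.sum_congr rfl
      intro k _
      ring
    rw [this, lemA n l (Finset.mem_range.1 hl)]
  rw [Finset.sum_congr rfl step2, hIcc (fun k => (-1:ℝ)^(k-1)/(k:ℝ)^s)]
  apply Finset.sum_congr rfl
  intro j _
  simp
end
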